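/- arXiv:2103.07705 — 6 statements merged into one kernel-verified Lean document; each statement's English description precedes it below -/
import Mathlib

section
/- Let G be a unicyclic graph with n ≥ 4 vertices and let x = (x_1, ..., x_n) be its degree sequence in non-increasing order. Then x is majorized by the sequence (n-1, 2, 2, 1, ..., 1) (with n-3 ones), i.e., for every 1 ≤ k ≤ n-1 the partial sum x_1 + ... + x_k is at most the corresponding partial sum of (n-1, 2, 2, 1, ..., 1), and both sequences sum to 2n. -/
/-!
Every vertex of a connected graph on `n ≥ 2` vertices has degree between `1` and `n - 1`, the
degrees of a unicyclic graph add up to `2n`, and the (at least three) vertices on its cycle have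
degree at least `2`, so the third largest degree is at least `2`. For `k ≥ 3` the last `n - k`
degrees are at least `1`, hence the first `k` add up to at most `2n - (n - k) = n + k`; for `k = 2`
one subtracts the third degree from the bound for `k = 3`, and `k = 1` is the bound `n - 1`.
-/

open Finset SimpleGraph

/-- A unicyclic graph: connected with as many edges as vertices. -/
def IsUnicyclic {n : ℕ} (G : SimpleGraph (Fin n)) [DecidableRel G.Adj] : Prop :=
  G.Connected ∧ G.edgeFinset.card = n

/-- The graph `U_n^3`: a triangle on vertices 0,1,2 with n-3 pendant edges attached to 0. -/
def unicyclicStar (n : ℕ) : SimpleGraph (Fin n) :=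
  SimpleGraph.fromRel (fun i j => i.val = 0 ∨ (i.val = 1 ∧ j.val = 2))

namespace SimpleGraph

variable {V : Type*} {G : SimpleGraph V}

theorem Walk.IsCycle.two_le_degree {u v : V} {c : G.Walk u u} (hc : c.IsCycle)
    (hv : v ∈ c.support) [Fintype (G.neighborSet v)] : 2 ≤ G.degree v :=
  calc 2 = (c.toSubgraph.neighborSet v).ncard := (hc.ncard_neighborSet_toSubgraph_eq_two hv).symm
    _ ≤ (G.neighborSet v).ncard :=
      Set.ncard_le_ncard (c.toSubgraph.neighborSet_subset v) (Set.toFinite _)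
    _ = G.degree v := by rw [Set.ncard_eq_toFinset_card', Set.toFinset_card,
      card_neighborSet_eq_degree]

theorem Walk.IsCycle.three_le_card_support_tail_toFinset [DecidableEq V] {u : V}
    {c : G.Walk u u} (hc : c.IsCycle) : 3 ≤ c.support.tail.toFinset.card := by
  rw [List.toFinset_card_of_nodup hc.support_nodup, List.length_tail, Walk.length_support]
  exact hc.three_le_length

theorem exists_finset_two_le_degree_of_not_isAcyclic [DecidableEq V] [G.LocallyFinite]
    (hG : ¬ G.IsAcyclic) : ∃ s : Finset V, 3 ≤ #s ∧ ∀ v ∈ s, 2 ≤ G.degree v := by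
  obtain ⟨u, c, hc⟩ : ∃ (u : V) (c : G.Walk u u), c.IsCycle := by
    simpa [IsAcyclic] using hG
  refine ⟨c.support.tail.toFinset, hc.three_le_card_support_tail_toFinset, fun v hv ↦ ?_⟩
  exact hc.two_le_degree (List.mem_of_mem_tail (List.mem_toFinset.mp hv))

end SimpleGraph

theorem IsUnicyclic.not_isAcyclic {n : ℕ} {G : SimpleGraph (Fin n)} [DecidableRel G.Adj]
    (hG : IsUnicyclic G) : ¬ G.IsAcyclic := fun hac ↦ by
  have := IsTree.card_edgeFinset ⟨hG.1, hac⟩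
  rw [hG.2, Fintype.card_fin] at this
  omega

theorem sum_range_eq_sum_of_perm {n : ℕ} {x : ℕ → ℕ} (f : Fin n → ℕ) (σ : Equiv.Perm (Fin n))
    (hx : ∀ i : Fin n, x i = f (σ i)) : ∑ i ∈ range n, x i = ∑ v, f v := by
  rw [← Fin.sum_univ_eq_sum_range]
  simp_rw [hx]
  exact Equiv.sum_comp σ f

theorem le_apply_of_lt_card {x : ℕ → ℕ} {n m k : ℕ} (hdec : ∀ i j, i ≤ j → j < n → x j ≤ x i)
    (s : Finset ℕ) (hs : ∀ i ∈ s, i < n ∧ m ≤ x i) (hk : k < #s) : m ≤ x k := by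
  obtain ⟨i, his, hik⟩ := exists_mem_notMem_of_card_lt_card (s := range k) (by simpa using hk)
  obtain ⟨hin, hmi⟩ := hs i his
  exact hmi.trans (hdec k i (by simpa using hik) hin)

def unicyclicStarDegree (n i : ℕ) : ℕ := if i = 0 then n - 1 else if i ≤ 2 then 2 else 1

theorem sum_range_unicyclicStarDegree_of_three_le {n k : ℕ} (hn : 1 ≤ n) (hk : 3 ≤ k) :
    ∑ i ∈ range k, unicyclicStarDegree n i = n + k := by
  induction k, hk using Nat.le_induction with
  | base =>
    simp only [sum_range_succ, range_one, sum_singleton, unicyclicStarDegree, ↓reduceIte,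
      one_ne_zero, Nat.one_le_ofNat, OfNat.ofNat_ne_zero, le_refl]
    omega
  | succ k hk ih =>
    rw [sum_range_succ, ih, unicyclicStarDegree, if_neg (by omega), if_neg (by omega)]
    omega

theorem sum_range_le_sum_range_unicyclicStarDegree {n : ℕ} {x : ℕ → ℕ} (hn : 3 ≤ n)
    (hpos : ∀ i < n, 1 ≤ x i) (hmax : x 0 ≤ n - 1) (htwo : 2 ≤ x 2)
    (hsum : ∑ i ∈ range n, x i = 2 * n) {k : ℕ} (hk : k ≤ n) :
    ∑ i ∈ range k, x i ≤ ∑ i ∈ range k, unicyclicStarDegree n i := by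
  have hhead : ∀ j ≤ n, ∑ i ∈ range j, x i ≤ n + j := fun j hj ↦ by
    have htail : #(Ico j n) • 1 ≤ ∑ i ∈ Ico j n, x i :=
      card_nsmul_le_sum _ _ _ fun i hi ↦ hpos i (mem_Ico.mp hi).2
    have hsplit := sum_range_add_sum_Ico x hj
    rw [Nat.card_Ico, smul_eq_mul, mul_one] at htail
    omega
  match k with
  | 0 => simp
  | 1 => simpa [unicyclicStarDegree] using hmax
  | 2 =>
    have := hhead 3 hn
    simp only [sum_range_succ, range_one, sum_singleton, unicyclicStarDegree, ↓reduceIte,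
      one_ne_zero, Nat.one_le_ofNat] at this ⊢
    omega
  | k + 3 =>
    rw [sum_range_unicyclicStarDegree_of_three_le (by omega) (by omega)]
    exact hhead _ hk

theorem stmt1_general {n : ℕ} (G : SimpleGraph (Fin n)) [DecidableRel G.Adj]
    (hG : IsUnicyclic G) (σ : Equiv.Perm (Fin n)) (x : ℕ → ℕ)
    (hx : ∀ i : Fin n, x i.val = G.degree (σ i))
    (hdec : ∀ i j : ℕ, i ≤ j → j < n → x j ≤ x i)
    (b : ℕ → ℕ) (hb : ∀ i, b i = if i = 0 then n - 1 else if i ≤ 2 then 2 else 1) :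
    (∀ k, 1 ≤ k → k ≤ n - 1 →
      ∑ i ∈ Finset.range k, x i ≤ ∑ i ∈ Finset.range k, b i) ∧
    ∑ i ∈ Finset.range n, x i = 2 * n ∧ ∑ i ∈ Finset.range n, b i = 2 * n := by
  obtain ⟨s, hs3, hs2⟩ := exists_finset_two_le_degree_of_not_isAcyclic hG.not_isAcyclic
  have hn : 3 ≤ n := by simpa using hs3.trans (card_le_univ s)
  have : Nontrivial (Fin n) := Fin.nontrivial_iff_two_le.mpr (by omega)
  have hsum : ∑ i ∈ range n, x i = 2 * n := by
    rw [sum_range_eq_sum_of_perm (fun v ↦ G.degree v) σ hx, sum_degrees_eq_twice_card_edges, hG.2]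
  have htwo : 2 ≤ x 2 := by
    refine le_apply_of_lt_card hdec (s.image fun v ↦ (σ.symm v : ℕ)) ?_ ?_
    · simp only [mem_image, forall_exists_index, and_imp]
      rintro _ v hv rfl
      obtain ⟨i, rfl⟩ := σ.surjective v
      simpa [hx] using hs2 _ hv
    · rwa [card_image_of_injective s fun a b h ↦ σ.symm.injective (Fin.ext h)]
  have hpos : ∀ i (hi : i < n), 1 ≤ x i := fun i hi ↦
    (hx ⟨i, hi⟩).symm ▸ hG.1.preconnected.degree_pos_of_nontrivial _
  have hmax : x 0 ≤ n - 1 := by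
    have := G.degree_lt_card_verts (σ ⟨0, by omega⟩)
    rw [Fintype.card_fin] at this
    rw [hx ⟨0, by omega⟩]
    omega
  obtain rfl : b = unicyclicStarDegree n := funext hb
  refine ⟨fun k _ hk ↦ sum_range_le_sum_range_unicyclicStarDegree hn hpos hmax htwo hsum
    (by omega), hsum, ?_⟩
  rw [sum_range_unicyclicStarDegree_of_three_le (by omega) hn]
  ring

theorem stmt1 {n : ℕ} (hn : 4 ≤ n) (G : SimpleGraph (Fin n)) [DecidableRel G.Adj]
    (hG : IsUnicyclic G) (σ : Equiv.Perm (Fin n)) (x : ℕ → ℕ)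
    (hx : ∀ i : Fin n, x i.val = G.degree (σ i))
    (hdec : ∀ i j : ℕ, i ≤ j → j < n → x j ≤ x i)
    (b : ℕ → ℕ) (hb : ∀ i, b i = if i = 0 then n - 1 else if i ≤ 2 then 2 else 1) :
    (∀ k, 1 ≤ k → k ≤ n - 1 →
      ∑ i ∈ Finset.range k, x i ≤ ∑ i ∈ Finset.range k, b i) ∧
    ∑ i ∈ Finset.range n, x i = 2 * n ∧ ∑ i ∈ Finset.range n, b i = 2 * n :=
  stmt1_general G hG σ x hx hdec b hb
end

section
/- If G is a unicyclic graph with n ≥ 4 vertices and f : [1,∞) → ℝ is a convex function, then n·f(2) ≤ Σ_{u ∈ V(G)} f(d_u) ≤ f(n-1) + 2f(2) + (n-3)f(1), where d_u denotes the degree of vertex u. -/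
/-!
Subtracting from `f` its chord through `1` and `2` leaves a convex function `h = chordGap f`
with `h 1 = h 2 = 0`; it is nonnegative at the integers `≥ 1`, nondecreasing on `[2, ∞)`, and
`h a + h b ≤ h (a + b - 2)` for `a, b ≥ 2`. As the degrees sum to `2n`, the chord contributes
exactly `n f(2)` to `∑ f(d_u)`, and both bounds become `0 ≤ ∑ h(d_u) ≤ h(n - 1)`. For the upper
one, merge the degrees `≥ 2`: their excesses over `2` add up to `n - k`, where `k` is the number
of such vertices, and `k ≥ 3` because `d_u + d_v ≤ n + 1` for distinct `u, v` (they share at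
most one edge).
-/

open Finset SimpleGraph

theorem ConvexOn.map_add_map_le_of_mem_Icc {s : Set ℝ} {f : ℝ → ℝ} (hf : ConvexOn ℝ s f)
    {a b x y : ℝ} (ha : a ∈ s) (hb : b ∈ s) (hx : x ∈ Set.Icc a b) (hxy : x + y = a + b) :
    f x + f y ≤ f a + f b := by
  rcases hx.1.eq_or_lt with rfl | hax
  · rw [show y = b by linarith]
  rcases hx.2.eq_or_lt with rfl | hxb
  · rw [show y = a by linarith, add_comm]
  have hfx := hf.secant_mono_aux1 ha hb hax hxb
  have hfy := hf.secant_mono_aux1 ha hb (by linarith : a < y) (by linarith : y < b)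
  refine le_of_mul_le_mul_left ?_ (by linarith : 0 < b - a)
  obtain rfl : y = a + b - x := by linarith
  linarith

noncomputable def chordGap (f : ℝ → ℝ) (x : ℝ) : ℝ :=
  f x - f 1 - (x - 1) * (f 2 - f 1)

section ChordGap

variable {f : ℝ → ℝ}

@[simp] lemma chordGap_one : chordGap f 1 = 0 := by simp [chordGap]

@[simp] lemma chordGap_two : chordGap f 2 = 0 := by norm_num [chordGap]

lemma ConvexOn.chordGap {s : Set ℝ} (hf : ConvexOn ℝ s f) : ConvexOn ℝ s (chordGap f) := by
  refine ⟨hf.1, fun x hx y hy a b ha hb hab => ?_⟩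
  have := hf.2 hx hy ha hb hab
  simp only [_root_.chordGap, smul_eq_mul] at this ⊢
  linear_combination this + (2 * f 1 - f 2) * hab

lemma chordGap_nonneg (hf : ConvexOn ℝ (Set.Ici 1) f) {x : ℝ} (hx : 2 ≤ x) :
    0 ≤ chordGap f x := by
  simpa using hf.chordGap.le_right_of_left_le'' Set.self_mem_Ici
    (Set.mem_Ici.2 (by linarith)) one_lt_two hx (by simp)

lemma chordGap_monotoneOn (hf : ConvexOn ℝ (Set.Ici 1) f) :
    MonotoneOn (chordGap f) (Set.Ici 2) := fun x hx _ hy hxy =>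
  hf.chordGap.le_right_of_left_le'' (x := 1) Set.self_mem_Ici
    (Set.mem_Ici.2 (by linarith [hy.out])) (by linarith [hx.out]) hxy
    (by simpa using chordGap_nonneg hf hx)

lemma chordGap_natCast_nonneg (hf : ConvexOn ℝ (Set.Ici 1) f) {k : ℕ} (hk : 1 ≤ k) :
    0 ≤ chordGap f k := by
  rcases hk.eq_or_lt with rfl | hk
  · simp
  · exact chordGap_nonneg hf (by exact_mod_cast hk)

lemma chordGap_add_two_add_le (hf : ConvexOn ℝ (Set.Ici 1) f) {a b : ℝ} (ha : 0 ≤ a)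
    (hb : 0 ≤ b) : chordGap f (a + 2) + chordGap f (b + 2) ≤ chordGap f (a + b + 2) := by
  have := hf.chordGap.map_add_map_le_of_mem_Icc (x := a + 2) (y := b + 2)
    (Set.mem_Ici.2 one_le_two) (Set.mem_Ici.2 (by linarith))
    (⟨by linarith, by linarith⟩ : a + 2 ∈ Set.Icc 2 (a + b + 2)) (by ring)
  simpa using this

lemma sum_chordGap_le_chordGap_sum (hf : ConvexOn ℝ (Set.Ici 1) f) {ι : Type*} (s : Finset ι)
    {x : ι → ℝ} (hx : ∀ i ∈ s, 2 ≤ x i) :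
    ∑ i ∈ s, chordGap f (x i) ≤ chordGap f (∑ i ∈ s, (x i - 2) + 2) := by
  have := le_sum_of_subadditive_on_pred (fun t => -chordGap f (t + 2)) (fun t => 0 ≤ t)
    (by simp) (fun a b ha hb => by linarith [chordGap_add_two_add_le hf ha hb])
    (fun a b => add_nonneg) (fun i => x i - 2) (s := s) (fun i hi => sub_nonneg.2 (hx i hi))
  simpa [sum_neg_distrib] using this

end ChordGap

section DegreeSequence

variable {ι : Type*} [Fintype ι] {f : ℝ → ℝ}

lemma sum_eq_sum_add_card_compl [DecidableEq ι] {d : ι → ℕ} {t : Finset ι}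
    (ht : ∀ i ∉ t, d i = 1) : ∑ i, d i = ∑ i ∈ t, d i + #tᶜ := by
  rw [← sum_add_sum_compl t d, card_eq_sum_ones]
  exact congrArg _ (sum_congr rfl fun i hi => ht i (mem_compl.1 hi))

lemma sum_eq_card_mul_add_sum_chordGap (f : ℝ → ℝ) {d : ι → ℕ}
    (hsum : ∑ i, d i = 2 * Fintype.card ι) :
    ∑ i, f (d i) = Fintype.card ι * f 2 + ∑ i, chordGap f (d i) := by
  have hsumR : ∑ i, (d i : ℝ) = 2 * Fintype.card ι := by exact_mod_cast hsum
  simp only [chordGap, sum_sub_distrib, ← sum_mul, hsumR, sum_const, card_univ, nsmul_eq_mul]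
  ring

theorem card_mul_le_sum_of_sum_eq_two_mul_card (hf : ConvexOn ℝ (Set.Ici 1) f) {d : ι → ℕ}
    (h1 : ∀ i, 1 ≤ d i) (hsum : ∑ i, d i = 2 * Fintype.card ι) :
    Fintype.card ι * f 2 ≤ ∑ i, f (d i) := by
  rw [sum_eq_card_mul_add_sum_chordGap f hsum, le_add_iff_nonneg_right]
  exact sum_nonneg fun i _ => chordGap_natCast_nonneg hf (h1 i)

theorem sum_le_of_sum_eq_two_mul_card [DecidableEq ι] (hf : ConvexOn ℝ (Set.Ici 1) f)
    {d : ι → ℕ} (h1 : ∀ i, 1 ≤ d i) (hsum : ∑ i, d i = 2 * Fintype.card ι)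
    (h3 : 3 ≤ #{i | 2 ≤ d i}) :
    ∑ i, f (d i) ≤ f (Fintype.card ι - 1) + 2 * f 2 + (Fintype.card ι - 3) * f 1 := by
  set S : Finset ι := {i | 2 ≤ d i}
  have hS : ∑ i ∈ S, (d i : ℝ) = Fintype.card ι + #S := by
    have hsplit := sum_eq_sum_add_card_compl (t := S) fun i hi => by
      simp only [S, mem_filter, mem_univ, true_and, not_le] at hi; linarith [h1 i]
    rw [card_compl, hsum] at hsplit
    have := card_le_univ S
    exact_mod_cast (by omega : ∑ i ∈ S, d i = Fintype.card ι + #S)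
  have hS3 : (3 : ℝ) ≤ #S := by exact_mod_cast h3
  have hSι : (#S : ℝ) ≤ Fintype.card ι := by exact_mod_cast card_le_univ S
  have hgap : ∑ i, chordGap f (d i) ≤ chordGap f (Fintype.card ι - 1) := calc
    ∑ i, chordGap f (d i) = ∑ i ∈ S, chordGap f (d i) := by
      refine (sum_filter_of_ne fun i _ hi => ?_).symm
      by_contra hlt
      have : d i = 1 := by linarith [h1 i, not_le.1 hlt]
      simp [this] at hi
    _ ≤ chordGap f (∑ i ∈ S, ((d i : ℝ) - 2) + 2) :=
      sum_chordGap_le_chordGap_sum hf S fun i hi => by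
        simp only [S, mem_filter] at hi; exact_mod_cast hi.2
    _ ≤ chordGap f (Fintype.card ι - 1) := by
      have hsub : ∑ i ∈ S, ((d i : ℝ) - 2) + 2 = Fintype.card ι - #S + 2 := by
        rw [sum_sub_distrib, hS, sum_const, nsmul_eq_mul]; ring
      rw [hsub]
      exact chordGap_monotoneOn hf (Set.mem_Ici.2 (by linarith)) (Set.mem_Ici.2 (by linarith))
        (by linarith)
  have hend : Fintype.card ι * f 2 + chordGap f (Fintype.card ι - 1) =
      f (Fintype.card ι - 1) + 2 * f 2 + (Fintype.card ι - 3) * f 1 := by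
    unfold chordGap; ring
  rw [sum_eq_card_mul_add_sum_chordGap f hsum, ← hend]
  linarith

end DegreeSequence

theorem SimpleGraph.degree_add_degree_le {V : Type*} [Fintype V] [DecidableEq V]
    (G : SimpleGraph V) [DecidableRel G.Adj] {u v : V} (huv : u ≠ v) :
    G.degree u + G.degree v ≤ #G.edgeFinset + 1 := by
  rw [← card_incidenceFinset_eq_degree, ← card_incidenceFinset_eq_degree,
    ← card_union_add_card_inter]
  gcongr
  · exact union_subset (G.incidenceFinset_subset u) (G.incidenceFinset_subset v)
  · refine card_le_one.2 fun e he e' he' => ?_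
    simp only [mem_inter, mem_incidenceFinset] at he he'
    rw [G.incidenceSet_inter_incidenceSet_subset huv he,
      G.incidenceSet_inter_incidenceSet_subset huv he']

namespace IsUnicyclic

variable {n : ℕ} {G : SimpleGraph (Fin n)} [DecidableRel G.Adj]

lemma sum_degree (hG : IsUnicyclic G) : ∑ u, G.degree u = 2 * n := by
  rw [G.sum_degrees_eq_twice_card_edges, hG.2]

lemma one_le_degree (hn : 2 ≤ n) (hG : IsUnicyclic G) (u : Fin n) : 1 ≤ G.degree u :=
  haveI := Fin.nontrivial_iff_two_le.2 hn
  hG.1.preconnected.degree_pos_of_nontrivial u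

lemma three_le_card_two_le_degree (hn : 2 ≤ n) (hG : IsUnicyclic G) :
    3 ≤ #{u | 2 ≤ G.degree u} := by
  by_contra! hS
  obtain ⟨t, hSt, ht⟩ := exists_superset_card_eq (s := {u | 2 ≤ G.degree u}) (n := 2)
    (by omega) (by simpa using hn)
  obtain ⟨u, v, huv, rfl⟩ := card_eq_two.1 ht
  have hrest : ∀ w ∉ ({u, v} : Finset (Fin n)), G.degree w = 1 := fun w hw => by
    have : ¬ 2 ≤ G.degree w := fun h => hw (hSt (by simpa using h))
    have := hG.one_le_degree hn w
    omega
  have hsplit := sum_eq_sum_add_card_compl hrest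
  rw [hG.sum_degree, card_compl, ht, sum_pair huv, Fintype.card_fin] at hsplit
  have := G.degree_add_degree_le huv
  rw [hG.2] at this
  omega

end IsUnicyclic

theorem stmt2 {n : ℕ} (hn : 4 ≤ n) (G : SimpleGraph (Fin n)) [DecidableRel G.Adj]
    (hG : IsUnicyclic G) (f : ℝ → ℝ) (hf : ConvexOn ℝ (Set.Ici 1) f) :
    (n : ℝ) * f 2 ≤ ∑ u : Fin n, f (G.degree u) ∧
      ∑ u : Fin n, f (G.degree u) ≤ f ((n : ℝ) - 1) + 2 * f 2 + ((n : ℝ) - 3) * f 1 := by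
  have h1 := hG.one_le_degree (by omega)
  have hsum : ∑ u, G.degree u = 2 * Fintype.card (Fin n) := by
    rw [hG.sum_degree, Fintype.card_fin]
  have h3 := hG.three_le_card_two_le_degree (by omega)
  constructor
  · simpa only [Fintype.card_fin] using card_mul_le_sum_of_sum_eq_two_mul_card hf h1 hsum
  · simpa only [Fintype.card_fin] using sum_le_of_sum_eq_two_mul_card hf h1 hsum h3
end

section
/- If G is a unicyclic graph with n ≥ 4 vertices and f : [1,∞) → ℝ is a concave function, then f(n-1) + 2f(2) + (n-3)f(1) ≤ Σ_{u ∈ V(G)} f(d_u) ≤ n·f(2). -/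
/-!
The upper bound is Jensen's inequality: the degrees lie in `[1, ∞)` and average to `2`.

For the lower bound, let `N = n - 1` and subtract from `f` the chord through `(2, f 2)` and
`(N, f N)`. The remainder `φ` is concave with `φ 2 = φ N`, hence `φ ≥ φ 2` on `[2, N]` and
`φ ≥ φ 1` on `[1, N]`. All degrees lie in `[1, N]`, and at least three of them are `≥ 2`, since
the degrees sum to `2n` while two vertices meet at most `n + 1` edges. So
`∑ φ(d_u) ≥ 3 φ 2 + (n - 3) φ 1`, and the linear part contributes equally to both sides because
the degrees and `(N, 2, 2, 1, …, 1)` both sum to `2n`.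
-/

open Finset SimpleGraph

namespace ConcaveOn

variable {s : Set ℝ} {g : ℝ → ℝ}

theorem le_of_mem_Icc_of_eq (hg : ConcaveOn ℝ s g) {a b x : ℝ} (ha : a ∈ s) (hb : b ∈ s)
    (heq : g a = g b) (hx : x ∈ Set.Icc a b) : g a ≤ g x := by
  simpa [heq] using hg.min_le_of_mem_Icc ha hb hx

theorem le_of_lt_of_eq (hg : ConcaveOn ℝ s g) {x a b : ℝ} (hx : x ∈ s) (hb : b ∈ s)
    (hxa : x < a) (hab : a < b) (heq : g a = g b) : g x ≤ g a := by
  have hslope := hg.slope_anti_adjacent hx hb hxa hab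
  rw [heq, sub_self, zero_div, le_div_iff₀ (sub_pos.2 hxa), zero_mul, sub_nonneg, ← heq]
    at hslope
  exact hslope

theorem le_of_mem_Icc_of_lt_of_eq (hg : ConcaveOn ℝ s g) {x a b y : ℝ} (hx : x ∈ s)
    (hb : b ∈ s) (hxa : x < a) (hab : a < b) (heq : g a = g b) (hy : y ∈ Set.Icc x b) :
    g x ≤ g y := by
  have hmin := hg.min_le_of_mem_Icc hx hb hy
  rwa [min_eq_left (heq ▸ hg.le_of_lt_of_eq hx hb hxa hab heq)] at hmin

theorem sum_le_card_mul_of_sum_eq {ι : Type*} [Fintype ι] {f : ℝ → ℝ} (hf : ConcaveOn ℝ s f)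
    {d : ι → ℝ} (hd : ∀ i, d i ∈ s) {m : ℝ} (hsum : ∑ i, d i = Fintype.card ι * m) :
    ∑ i, f (d i) ≤ Fintype.card ι * f m := by
  rcases isEmpty_or_nonempty ι with hι | hι
  · simp
  have hcard : (0 : ℝ) < Fintype.card ι := by exact_mod_cast Fintype.card_pos
  have hjensen := hf.le_map_sum (t := univ) (w := fun _ => (Fintype.card ι : ℝ)⁻¹)
    (fun _ _ => by positivity) (by simp [hcard.ne']) (fun i _ => hd i)
  rw [← smul_sum, ← smul_sum, hsum, smul_eq_mul, smul_eq_mul, inv_mul_cancel_left₀ hcard.ne',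
    inv_mul_le_iff₀ hcard] at hjensen
  exact hjensen

end ConcaveOn

theorem Finset.card_mul_add_mul_sub_le_sum {ι : Type*} [Fintype ι] (p : ι → Prop)
    [DecidablePred p] {φ : ι → ℝ} {k : ℕ} {b c : ℝ} (hbc : b ≤ c) (hk : k ≤ #{i | p i})
    (hb : ∀ i, b ≤ φ i) (hc : ∀ i, p i → c ≤ φ i) :
    Fintype.card ι * b + k * (c - b) ≤ ∑ i, φ i := by
  have hk' : (k : ℝ) ≤ #{i | p i} := by exact_mod_cast hk
  calc Fintype.card ι * b + k * (c - b) ≤ Fintype.card ι * b + #{i | p i} * (c - b) := by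
        gcongr
    _ = ∑ i, (b + if p i then c - b else 0) := by
        simp only [sum_add_distrib, sum_const, card_univ, nsmul_eq_mul, sum_ite]
        ring
    _ ≤ ∑ i, φ i := by
        gcongr with i
        split_ifs with hi
        · linarith [hc i hi]
        · linarith [hb i]

namespace SimpleGraph

variable {V : Type*} [Fintype V] [DecidableEq V] (G : SimpleGraph V) [DecidableRel G.Adj]

theorem degree_add_degree_le_s3 {u v : V} (huv : u ≠ v) :
    G.degree u + G.degree v ≤ #G.edgeFinset + 1 := by
  rw [← card_incidenceFinset_eq_degree, ← card_incidenceFinset_eq_degree,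
    ← card_union_add_card_inter]
  gcongr
  · exact union_subset (G.incidenceFinset_subset u) (G.incidenceFinset_subset v)
  · calc #(G.incidenceFinset u ∩ G.incidenceFinset v) ≤ #{s(u, v)} := card_le_card fun e he => by
          rw [mem_inter, mem_incidenceFinset, mem_incidenceFinset] at he
          simpa using G.incidenceSet_inter_incidenceSet_subset huv he
      _ = 1 := card_singleton _

theorem three_le_card_two_le_degree [Nonempty V] (hcard : #G.edgeFinset = Fintype.card V) :
    3 ≤ #{u | 2 ≤ G.degree u} := by
  by_contra! h
  set S : Finset V := {u | 2 ≤ G.degree u}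
  have hsum : ∑ u ∈ S, G.degree u + ∑ u ∈ Sᶜ, G.degree u = 2 * Fintype.card V := by
    rw [sum_add_sum_compl, sum_degrees_eq_twice_card_edges, hcard]
  have hcompl : ∑ u ∈ Sᶜ, G.degree u ≤ Fintype.card V - #S := by
    rw [← card_compl]
    simpa using sum_le_card_nsmul Sᶜ (fun u => G.degree u) 1 fun u hu => by
      simp only [S, mem_compl, mem_filter, mem_univ, true_and] at hu; omega
  have hpos := Fintype.card_pos (α := V)
  have hSV := card_le_univ S
  have hlt : ∀ u, G.degree u < Fintype.card V := G.degree_lt_card_verts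
  interval_cases hS : #S
  · have hS0 : ∑ u ∈ S, G.degree u = 0 := by rw [card_eq_zero.1 hS, sum_empty]
    omega
  · obtain ⟨u, hu⟩ := card_eq_one.1 hS
    have hS1 : ∑ u ∈ S, G.degree u = G.degree u := by rw [hu, sum_singleton]
    have hu_lt := hlt u
    omega
  · obtain ⟨u, v, huv, hu⟩ := card_eq_two.1 hS
    have hS2 : ∑ u ∈ S, G.degree u = G.degree u + G.degree v := by rw [hu, sum_pair huv]
    have hpair := G.degree_add_degree_le_s3 huv
    omega

end SimpleGraph

theorem ConcaveOn.map_add_two_mul_map_two_add_le_sum {ι : Type*} [Fintype ι] {f : ℝ → ℝ}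
    (hf : ConcaveOn ℝ (Set.Ici 1) f) {N : ℝ} (hN : 2 < N) {d : ι → ℝ}
    (hd : ∀ i, d i ∈ Set.Icc 1 N) (h3 : 3 ≤ #{i | 2 ≤ d i})
    (hsum : ∑ i, d i = N + Fintype.card ι + 1) :
    f N + 2 * f 2 + (Fintype.card ι - 3) * f 1 ≤ ∑ i, f (d i) := by
  set σ := (f N - f 2) / (N - 2)
  set φ : ℝ → ℝ := fun x => f x - σ * x
  have hφ : ConcaveOn ℝ (Set.Ici 1) φ :=
    hf.sub ((σ • LinearMap.id : ℝ →ₗ[ℝ] ℝ).convexOn (convex_Ici 1))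
  have heq : φ 2 = φ N := by
    have hN2 : N - 2 ≠ 0 := by linarith
    simp only [φ, σ]
    field_simp
    ring
  have h2 : ∀ x ∈ Set.Icc 2 N, φ 2 ≤ φ x := fun x hx =>
    hφ.le_of_mem_Icc_of_eq (by norm_num) (Set.mem_Ici.2 (by linarith)) heq hx
  have h1 : ∀ x ∈ Set.Icc 1 N, φ 1 ≤ φ x := fun x hx =>
    hφ.le_of_mem_Icc_of_lt_of_eq (by norm_num) (Set.mem_Ici.2 (by linarith)) one_lt_two hN
      heq hx
  have hbound := Finset.card_mul_add_mul_sub_le_sum (fun i => 2 ≤ d i)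
    (h1 2 ⟨one_le_two, hN.le⟩) h3 (fun i => h1 _ (hd i)) (fun i hi => h2 _ ⟨hi, (hd i).2⟩)
  have hexpand : ∑ i, φ (d i) = ∑ i, f (d i) - σ * ∑ i, d i := by
    simp only [φ, sum_sub_distrib, mul_sum]
  simp only [φ] at hbound hexpand heq
  rw [hsum] at hexpand
  push_cast at hbound
  linarith

theorem stmt3 {n : ℕ} (hn : 4 ≤ n) (G : SimpleGraph (Fin n)) [DecidableRel G.Adj]
    (hG : IsUnicyclic G) (f : ℝ → ℝ) (hf : ConcaveOn ℝ (Set.Ici 1) f) :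
    f ((n : ℝ) - 1) + 2 * f 2 + ((n : ℝ) - 3) * f 1 ≤ ∑ u : Fin n, f (G.degree u) ∧
      ∑ u : Fin n, f (G.degree u) ≤ (n : ℝ) * f 2 := by
  obtain ⟨hconn, hcard⟩ := hG
  have : Nontrivial (Fin n) := Fin.nontrivial_iff_two_le.2 (by omega)
  have hdeg : ∀ u, (G.degree u : ℝ) ∈ Set.Icc 1 ((n : ℝ) - 1) := fun u => by
    have hpos := hconn.preconnected.degree_pos_of_nontrivial u
    have hlt := G.degree_lt_card_verts u
    rw [Fintype.card_fin] at hlt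
    constructor
    · exact_mod_cast hpos
    · rw [le_sub_iff_add_le]
      exact_mod_cast hlt
  have hsum : ∑ u, (G.degree u : ℝ) = 2 * n := by
    exact_mod_cast hcard ▸ G.sum_degrees_eq_twice_card_edges
  have h3 : 3 ≤ #{u | 2 ≤ (G.degree u : ℝ)} := by
    simpa using G.three_le_card_two_le_degree (by simpa using hcard)
  constructor
  · have hn' : (4 : ℝ) ≤ n := by exact_mod_cast hn
    simpa using hf.map_add_two_mul_map_two_add_le_sum (by linarith) hdeg h3
      (by rw [hsum, Fintype.card_fin]; ring)
  · simpa using hf.sum_le_card_mul_of_sum_eq (fun u => (hdeg u).1) (m := 2)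
      (by rw [hsum, Fintype.card_fin, mul_comm])
end

section
/- Let G be a unicyclic graph with n ≥ 4 vertices and maximum degree Δ ≥ 3, with degree sequence x in non-increasing order. Let y be the n-tuple with y_1 = Δ, y_j = 2 for 1 < j ≤ n-Δ+2, and y_j = 1 for n-Δ+2 < j ≤ n. Then y is majorized by x. -/
open Finset SimpleGraph

/-!
The sorted degree sequence `x` of a unicyclic graph is a non-increasing sequence of positive
integers with `x 0 = Δ ≤ n` and total `2n`. For such a sequence, the sum of the first `k + 1`
terms is at least `min (Δ + 2k) (n + k + 1)`: either `x 1, …, x k` are all at least `2`, or some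
of them is `1`, and then every later term is `1`, so the tail sums to `n - k - 1`. That minimum
dominates the corresponding partial sum `Δ + k + min k (n - Δ + 1)` of `y`, and for `k = n - 1`
both equal `2n` as soon as `Δ ≥ 2`.
-/

/-- The tuple `y` of the statement, shifted to start at index `0`. -/
def extremalDegreeSeq (n Δ : ℕ) (i : ℕ) : ℕ :=
  if i = 0 then Δ else if i ≤ n - Δ + 1 then 2 else 1

lemma sum_range_succ_extremalDegreeSeq (n Δ k : ℕ) :
    ∑ i ∈ range (k + 1), extremalDegreeSeq n Δ i = Δ + k + min k (n - Δ + 1) := by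
  induction k with
  | zero => simp [extremalDegreeSeq]
  | succ k ih =>
    rw [sum_range_succ, ih, extremalDegreeSeq, if_neg k.succ_ne_zero]
    split_ifs <;> omega

section Sequences

variable {x : ℕ → ℕ} {n : ℕ}

lemma add_mul_le_sum_range_succ {c k : ℕ} (h : ∀ i ∈ Icc 1 k, c ≤ x i) :
    x 0 + k * c ≤ ∑ i ∈ range (k + 1), x i := by
  rw [sum_range_succ', add_comm]
  gcongr
  calc k * c = ∑ _i ∈ range k, c := by simp
    _ ≤ ∑ i ∈ range k, x (i + 1) :=
      sum_le_sum fun i hi => h _ (by simp only [mem_range, mem_Icc] at hi ⊢; omega)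

lemma sum_range_eq_add_of_eq_one {m : ℕ} (hmn : m ≤ n) (h : ∀ i, m ≤ i → i < n → x i = 1) :
    ∑ i ∈ range n, x i = ∑ i ∈ range m, x i + (n - m) := by
  rw [← sum_range_add_sum_Ico x hmn,
    sum_congr rfl fun i hi => h i (mem_Ico.1 hi).1 (mem_Ico.1 hi).2]
  simp

lemma add_add_min_le_sum_range_succ (hanti : ∀ i j, i ≤ j → j < n → x j ≤ x i)
    (hpos : ∀ i < n, 1 ≤ x i) (hx0 : x 0 ≤ n) (hsum : ∑ i ∈ range n, x i = 2 * n)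
    {k : ℕ} (hk : k < n) :
    x 0 + k + min k (n - x 0 + 1) ≤ ∑ i ∈ range (k + 1), x i := by
  by_cases hxk : 2 ≤ x k
  · have := add_mul_le_sum_range_succ (c := 2) fun i hi =>
      hxk.trans (hanti i k (mem_Icc.1 hi).2 hk)
    omega
  · have hones : ∀ i, k + 1 ≤ i → i < n → x i = 1 := fun i hki hi => by
      have := hanti k i (by omega) hi
      have := hpos i hi
      omega
    have htail := sum_range_eq_add_of_eq_one (m := k + 1) hk hones
    have hlow := add_mul_le_sum_range_succ (c := 1) (k := k) fun i hi =>
      hpos i (by simp only [mem_Icc] at hi; omega)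
    omega

end Sequences

section DegreeSequence

variable {n : ℕ} {G : SimpleGraph (Fin n)} [DecidableRel G.Adj] {σ : Equiv.Perm (Fin n)}
  {x : ℕ → ℕ}

lemma sum_range_eq_two_mul_card_edgeFinset (hx : ∀ i : Fin n, x i.val = G.degree (σ i)) :
    ∑ i ∈ range n, x i = 2 * #G.edgeFinset := by
  rw [sum_range fun i => x i, sum_congr rfl fun i _ => hx i,
    Equiv.sum_comp σ fun v => G.degree v, sum_degrees_eq_twice_card_edges]

lemma apply_zero_eq_maxDegree (hn : 0 < n) (hx : ∀ i : Fin n, x i.val = G.degree (σ i))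
    (hdec : ∀ i j : ℕ, i ≤ j → j < n → x j ≤ x i) : x 0 = G.maxDegree := by
  have : Nonempty (Fin n) := ⟨⟨0, hn⟩⟩
  obtain ⟨v, hv⟩ := G.exists_maximal_degree_vertex
  apply le_antisymm
  · exact (hx ⟨0, hn⟩).trans_le (G.degree_le_maxDegree _)
  · have := hx (σ.symm v)
    rw [Equiv.apply_symm_apply, ← hv] at this
    exact this ▸ hdec 0 _ (Nat.zero_le _) (σ.symm v).isLt

end DegreeSequence

theorem stmt13 {n Δ : ℕ} (hn : 4 ≤ n) (G : SimpleGraph (Fin n)) [DecidableRel G.Adj]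
    (hG : IsUnicyclic G) (hΔ : G.maxDegree = Δ) (hΔ3 : 3 ≤ Δ)
    (σ : Equiv.Perm (Fin n)) (x : ℕ → ℕ)
    (hx : ∀ i : Fin n, x i.val = G.degree (σ i))
    (hdec : ∀ i j : ℕ, i ≤ j → j < n → x j ≤ x i)
    (y : ℕ → ℕ) (hy : ∀ i, y i = if i = 0 then Δ else if i ≤ n - Δ + 1 then 2 else 1) :
    (∀ k, k ≤ n - 1 → ∑ i ∈ Finset.range k, y i ≤ ∑ i ∈ Finset.range k, x i) ∧
      ∑ i ∈ Finset.range n, y i = ∑ i ∈ Finset.range n, x i := by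
  obtain ⟨hconn, hcard⟩ := hG
  have : Nontrivial (Fin n) := Fin.nontrivial_iff_two_le.mpr (by omega)
  have hsum : ∑ i ∈ range n, x i = 2 * n := by
    rw [sum_range_eq_two_mul_card_edgeFinset hx, hcard]
  have hpos : ∀ i < n, 1 ≤ x i := fun i hi =>
    (hx ⟨i, hi⟩).symm ▸ hconn.preconnected.degree_pos_of_nontrivial _
  have hx0 : x 0 = Δ := hΔ ▸ apply_zero_eq_maxDegree (by omega) hx hdec
  have hΔn : Δ < n := hΔ ▸ G.maxDegree_lt_card_verts.trans_eq (Fintype.card_fin n)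
  have hysum : ∀ k, ∑ i ∈ range (k + 1), y i = Δ + k + min k (n - Δ + 1) := fun k => by
    rw [← sum_range_succ_extremalDegreeSeq]
    exact sum_congr rfl fun i _ => hy i
  have hle : ∀ k < n, ∑ i ∈ range (k + 1), y i ≤ ∑ i ∈ range (k + 1), x i := fun k hk => by
    rw [hysum, ← hx0]
    exact add_add_min_le_sum_range_succ hdec hpos (by omega) hsum hk
  refine ⟨fun k hk => ?_, ?_⟩
  · rcases k with _ | k
    · simp
    · exact hle k (by omega)
  · obtain ⟨m, rfl⟩ : ∃ m, n = m + 1 := ⟨n - 1, by omega⟩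
    refine le_antisymm (hle m (by omega)) ?_
    rw [hsum, hysum]
    omega
end

section
/- If G is a unicyclic graph with n ≥ 4 vertices and maximum degree Δ ≥ 3, and α ∈ (-∞,0) ∪ (1,∞), then Σ_{u ∈ V(G)} d_u^α ≥ Δ^α + (n-Δ+1)·2^α + Δ - 2, with equality if and only if G has degree sequence (Δ, 2, ..., 2, 1, ..., 1) with n-Δ+1 entries equal to 2 and Δ-2 entries equal to 1. -/
open Finset SimpleGraph

/-! For `α < 0` or `α > 1` the map `x ↦ x ^ α` is strictly convex on `(0, ∞)`, so at every
integer `k ≥ 3` it lies strictly above its chord through `(1, 1)` and `(2, 2 ^ α)`, and it meets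
that line at `k = 1, 2`. Remove one vertex of degree `Δ`: the other `n - 1` degrees are positive
and sum to `2n - Δ`, so summing the affine lower bound over them gives exactly the claimed bound,
with equality iff they all lie in `{1, 2}`; their number and sum then fix how many equal `2` and
how many `1`. -/

open Real Set in
lemma strictConvexOn_rpow_of_neg {p : ℝ} (hp : p < 0) :
    StrictConvexOn ℝ (Ioi 0) fun x : ℝ => x ^ p := by
  refine ⟨convex_Ioi 0, fun x hx y hy hxy a b ha hb hab => ?_⟩
  have hlog : log x * p ≠ log y * p := fun h =>
    hxy (log_injOn_pos hx hy (mul_right_cancel₀ hp.ne h))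
  calc (a • x + b • y) ^ p = exp (log (a * x + b * y) * p) := rpow_def_of_pos
          (add_pos (mul_pos ha hx) (mul_pos hb hy)) _
    _ ≤ exp ((a * log x + b * log y) * p) := exp_le_exp.2 <| mul_le_mul_of_nonpos_right
          (strictConcaveOn_log_Ioi.concaveOn.2 hx hy ha.le hb.le hab) hp.le
    _ = exp (a • (log x * p) + b • (log y * p)) := by simp only [smul_eq_mul]; ring_nf
    _ < a • exp (log x * p) + b • exp (log y * p) :=
          strictConvexOn_exp.2 trivial trivial hlog ha hb hab
    _ = a • x ^ p + b • y ^ p := by rw [rpow_def_of_pos hx, rpow_def_of_pos hy]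

lemma strictConvexOn_rpow_Ioi {α : ℝ} (hα : α < 0 ∨ 1 < α) :
    StrictConvexOn ℝ (Set.Ioi 0) fun x : ℝ => x ^ α :=
  hα.elim strictConvexOn_rpow_of_neg fun h =>
    (strictConvexOn_rpow h).subset Set.Ioi_subset_Ici_self (convex_Ioi 0)

lemma rpow_chord_lt {α : ℝ} (hα : α < 0 ∨ 1 < α) {x : ℝ} (hx : 2 < x) :
    2 ^ α + (x - 2) * (2 ^ α - 1) < x ^ α := by
  have hslope := (strictConvexOn_rpow_Ioi hα).slope_strict_mono_adjacent
    (Set.mem_Ioi.2 one_pos) (Set.mem_Ioi.2 (by linarith : (0:ℝ) < x)) one_lt_two hx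
  rw [Real.one_rpow, lt_div_iff₀ (by linarith)] at hslope
  norm_num at hslope
  linarith

lemma natCast_rpow_chord {α : ℝ} (hα : α < 0 ∨ 1 < α) {k : ℕ} (hk : 1 ≤ k) :
    2 ^ α + ((k : ℝ) - 2) * (2 ^ α - 1) ≤ (k : ℝ) ^ α ∧
      (2 ^ α + ((k : ℝ) - 2) * (2 ^ α - 1) = (k : ℝ) ^ α ↔ k ≤ 2) := by
  rcases le_or_gt k 2 with hk2 | hk2
  · have hk12 : k = 1 ∨ k = 2 := by omega
    have heq : 2 ^ α + ((k : ℝ) - 2) * (2 ^ α - 1) = (k : ℝ) ^ α := by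
      rcases hk12 with rfl | rfl <;> norm_num
    exact ⟨heq.le, iff_of_true heq hk2⟩
  · have hlt := rpow_chord_lt hα (by exact_mod_cast hk2 : (2:ℝ) < k)
    exact ⟨hlt.le, iff_of_false hlt.ne (by omega)⟩

namespace Multiset

lemma chord_le_sum_map_rpow {α : ℝ} (hα : α < 0 ∨ 1 < α) {M : Multiset ℕ}
    (hM : ∀ k ∈ M, 1 ≤ k) :
    (card M : ℝ) * 2 ^ α + ((M.sum : ℝ) - 2 * card M) * (2 ^ α - 1) ≤
        (M.map fun k : ℕ => (k : ℝ) ^ α).sum ∧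
      ((card M : ℝ) * 2 ^ α + ((M.sum : ℝ) - 2 * card M) * (2 ^ α - 1) =
        (M.map fun k : ℕ => (k : ℝ) ^ α).sum ↔ ∀ k ∈ M, k ≤ 2) := by
  induction M using Multiset.induction_on with
  | empty => simp
  | cons a M ih =>
    obtain ⟨hle, heq⟩ := ih fun k hk => hM k (mem_cons_of_mem hk)
    obtain ⟨hle_a, heq_a⟩ := natCast_rpow_chord hα (hM a (mem_cons_self a M))
    have hsplit : (card (a ::ₘ M) : ℝ) * 2 ^ α + (((a ::ₘ M).sum : ℝ) - 2 * card (a ::ₘ M)) *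
        (2 ^ α - 1) = (2 ^ α + ((a : ℝ) - 2) * (2 ^ α - 1)) +
          ((card M : ℝ) * 2 ^ α + ((M.sum : ℝ) - 2 * card M) * (2 ^ α - 1)) := by
      simp only [card_cons, sum_cons]
      push_cast
      ring
    rw [hsplit, map_cons, sum_cons, add_eq_add_iff_eq_and_eq hle_a hle, heq_a, heq,
      forall_mem_cons]
    exact ⟨add_le_add hle_a hle, Iff.rfl⟩

lemma forall_le_two_iff_eq_replicate {M : Multiset ℕ} (hM : ∀ k ∈ M, 1 ≤ k) :
    (∀ k ∈ M, k ≤ 2) ↔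
      M = replicate (M.sum - card M) 2 + replicate (2 * card M - M.sum) 1 := by
  refine ⟨fun h2 => ?_, fun h k hk => ?_⟩
  · have hM12 : M = replicate (M.count 2) 2 + replicate (M.count 1) 1 := by
      conv_lhs => rw [← filter_add_not (· = 2) M, filter_eq',
        filter_congr (q := (· = 1)) fun k hk => by have := hM k hk; have := h2 k hk; omega,
        filter_eq']
    have hcard := congrArg card hM12
    have hsum := congrArg Multiset.sum hM12
    simp only [card_add, card_replicate, sum_add, sum_replicate, smul_eq_mul] at hcard hsum
    conv_lhs => rw [hM12]
    congr 2 <;> omega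
  · rw [h] at hk
    simp only [mem_add, mem_replicate] at hk
    omega

lemma sum_map_rpow_bound_of_sum_eq_two_mul_card {α : ℝ} (hα : α < 0 ∨ 1 < α)
    {D : Multiset ℕ} {d : ℕ} (hD : ∀ k ∈ D, 1 ≤ k) (hsum : D.sum = 2 * card D) (hd : d ∈ D)
    (hdD : d ≤ card D) :
    (d : ℝ) ^ α + ((card D : ℝ) - d + 1) * 2 ^ α + d - 2 ≤
        (D.map fun k : ℕ => (k : ℝ) ^ α).sum ∧
      ((D.map fun k : ℕ => (k : ℝ) ^ α).sum =
          (d : ℝ) ^ α + ((card D : ℝ) - d + 1) * 2 ^ α + d - 2 ↔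
        D = d ::ₘ (replicate (card D - d + 1) 2 + replicate (d - 2) 1)) := by
  obtain ⟨M, rfl⟩ := exists_cons_of_mem hd
  have hM : ∀ k ∈ M, 1 ≤ k := fun k hk => hD k (mem_cons_of_mem hk)
  rw [card_cons, sum_cons] at hsum
  rw [card_cons] at hdD ⊢
  have hbound : (d : ℝ) ^ α + ((card M + 1 : ℕ) - d + 1) * 2 ^ α + d - 2 =
      (d : ℝ) ^ α + ((card M : ℝ) * 2 ^ α + ((M.sum : ℝ) - 2 * card M) * (2 ^ α - 1)) := by
    have : (M.sum : ℝ) = 2 * (card M + 1) - d := by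
      rw [eq_sub_iff_add_eq, add_comm]; exact_mod_cast hsum
    rw [this]; push_cast; ring
  obtain ⟨hle, heq⟩ := chord_le_sum_map_rpow hα hM
  rw [map_cons, sum_cons, hbound, add_right_inj, eq_comm, heq,
    forall_le_two_iff_eq_replicate hM, cons_inj_right,
    show M.sum - card M = card M + 1 - d + 1 by omega, show 2 * card M - M.sum = d - 2 by omega]
  exact ⟨add_le_add_right hle _, Iff.rfl⟩

end Multiset

theorem stmt16_general {n Δ : ℕ} (hn : 4 ≤ n) (G : SimpleGraph (Fin n)) [DecidableRel G.Adj]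
    (hG : IsUnicyclic G) (hΔ : G.maxDegree = Δ)
    (α : ℝ) (hα : α < 0 ∨ 1 < α) :
    (Δ : ℝ) ^ α + ((n : ℝ) - Δ + 1) * 2 ^ α + (Δ : ℝ) - 2 ≤
      ∑ u : Fin n, (G.degree u : ℝ) ^ α ∧
    ((∑ u : Fin n, (G.degree u : ℝ) ^ α =
        (Δ : ℝ) ^ α + ((n : ℝ) - Δ + 1) * 2 ^ α + (Δ : ℝ) - 2) ↔
      Finset.univ.val.map (fun u : Fin n => G.degree u) =
        Δ ::ₘ (Multiset.replicate (n - Δ + 1) 2 + Multiset.replicate (Δ - 2) 1)) := by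
  have : Nontrivial (Fin n) := Fin.nontrivial_iff_two_le.2 (by omega)
  obtain ⟨v, hv⟩ := G.exists_maximal_degree_vertex
  set D := univ.val.map fun u : Fin n => G.degree u
  have hcard : Multiset.card D = n := by simp [D]
  have hsum : ∑ u : Fin n, (G.degree u : ℝ) ^ α = (D.map fun k : ℕ => (k : ℝ) ^ α).sum := by
    rw [Multiset.map_map]; rfl
  have hpos : ∀ k ∈ D, 1 ≤ k := by
    rintro k hk
    obtain ⟨u, -, rfl⟩ := Multiset.mem_map.1 hk
    exact hG.1.preconnected.degree_pos_of_nontrivial u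
  have hD : D.sum = 2 * Multiset.card D := by
    rw [hcard, ← hG.2, ← sum_degrees_eq_twice_card_edges]; rfl
  have hΔD : Δ ∈ D := Multiset.mem_map.2 ⟨v, mem_univ_val v, hv.symm.trans hΔ⟩
  have hΔn : Δ ≤ Multiset.card D := by
    simpa [hcard, ← hΔ, hv] using (G.degree_lt_card_verts v).le
  rw [hsum, ← hcard]
  exact Multiset.sum_map_rpow_bound_of_sum_eq_two_mul_card hα hpos hD hΔD hΔn

theorem stmt16 {n Δ : ℕ} (hn : 4 ≤ n) (G : SimpleGraph (Fin n)) [DecidableRel G.Adj]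
    (hG : IsUnicyclic G) (hΔ : G.maxDegree = Δ) (hΔ3 : 3 ≤ Δ)
    (α : ℝ) (hα : α < 0 ∨ 1 < α) :
    (Δ : ℝ) ^ α + ((n : ℝ) - Δ + 1) * 2 ^ α + (Δ : ℝ) - 2 ≤
      ∑ u : Fin n, (G.degree u : ℝ) ^ α ∧
    ((∑ u : Fin n, (G.degree u : ℝ) ^ α =
        (Δ : ℝ) ^ α + ((n : ℝ) - Δ + 1) * 2 ^ α + (Δ : ℝ) - 2) ↔
      Finset.univ.val.map (fun u : Fin n => G.degree u) =
        Δ ::ₘ (Multiset.replicate (n - Δ + 1) 2 + Multiset.replicate (Δ - 2) 1)) :=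
  stmt16_general hn G hG hΔ α hα
end

section
/- Let G be a unicyclic graph with n ≥ 4 vertices and 1 ≤ p ≤ n-3 pendant vertices, with degree sequence x in non-increasing order. Let m = ⌊(2n-p)/(n-p)⌋ and t = 2n - p - m(n-p). Define a by a_j = m+1 for 1 ≤ j ≤ t, a_j = m for t < j ≤ n-p, a_j = 1 for j > n-p; and b by b_1 = p+2, b_j = 2 for 1 < j ≤ n-p, b_j = 1 for j > n-p. Then a ≺ x ≺ b (a is majorized by x, and x is majorized by b). -/
open Finset SimpleGraph

/-!
Let `L = n - p`. The degree sequence `x` consists of `L` entries `≥ 2` followed by `p` ones, and its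
first `L` entries sum to `2n - p = L m + t`. The sequences `a` and `b` have the same shape and the
same head sum, so only the partial sums over the head need comparing. Putting all the excess
`p` on the first entry, as `b` does, is extremal because the other head entries are at least `2`.
Spreading the sum as evenly as possible, as `a` does, is extremal because if a non-increasing head
fell below `k m + min k t` after `k` entries, its `k`-th entry would be at most `m`, and so would
all later ones, leaving the head sum short of `L m + t`.
-/

def IsMajorizedBy (n : ℕ) (y x : ℕ → ℕ) : Prop :=
  (∀ k, k ≤ n - 1 → ∑ i ∈ range k, y i ≤ ∑ i ∈ range k, x i) ∧
    ∑ i ∈ range n, y i = ∑ i ∈ range n, x i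

section Majorization

variable {x y : ℕ → ℕ}

theorem sum_range_add_mul_eq {L k c : ℕ} (hk : k ≤ L) (hx : ∀ i, k ≤ i → i < L → x i = c) :
    ∑ i ∈ range k, x i + (L - k) * c = ∑ i ∈ range L, x i := by
  rw [← sum_range_add_sum_Ico _ hk,
    sum_congr rfl fun i hi => hx i (mem_Ico.1 hi).1 (mem_Ico.1 hi).2]
  simp

theorem sum_range_add_mul_le {L k c : ℕ} (hk : k ≤ L) (hx : ∀ i, k ≤ i → i < L → c ≤ x i) :
    ∑ i ∈ range k, x i + (L - k) * c ≤ ∑ i ∈ range L, x i := by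
  rw [← sum_range_add_sum_Ico _ hk]
  gcongr
  simpa using card_nsmul_le_sum (Ico k L) x c fun i hi => hx i (mem_Ico.1 hi).1 (mem_Ico.1 hi).2

theorem isMajorizedBy_of_eq_one_tail {L n : ℕ} (hLn : L ≤ n)
    (hx : ∀ i, L ≤ i → i < n → x i = 1) (hy : ∀ i, L ≤ i → i < n → y i = 1)
    (hle : ∀ k ≤ L, ∑ i ∈ range k, y i ≤ ∑ i ∈ range k, x i)
    (heq : ∑ i ∈ range L, y i = ∑ i ∈ range L, x i) :
    IsMajorizedBy n y x := by
  have htail : ∀ k, L ≤ k → k ≤ n → ∑ i ∈ range k, y i = ∑ i ∈ range k, x i := fun k hLk hkn => by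
    have hxk := sum_range_add_mul_eq hLk fun i hLi hik => hx i hLi (by omega)
    have hyk := sum_range_add_mul_eq hLk fun i hLi hik => hy i hLi (by omega)
    omega
  refine ⟨fun k hk => ?_, htail n hLn le_rfl⟩
  rcases le_total k L with hkL | hLk
  · exact hle k hkL
  · exact (htail k hLk (by omega)).le

theorem sum_range_le_of_two_le {L k : ℕ} (hk : k ≤ L) (hx : ∀ i < L, 2 ≤ x i)
    (hy : ∀ i, 0 < i → i < L → y i = 2) (hsum : ∑ i ∈ range L, x i = ∑ i ∈ range L, y i) :
    ∑ i ∈ range k, x i ≤ ∑ i ∈ range k, y i := by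
  rcases Nat.eq_zero_or_pos k with rfl | hk0
  · simp
  have hy' := sum_range_add_mul_eq hk fun i hki hiL => hy i (by omega) hiL
  have := sum_range_add_mul_le hk fun i _ hi => hx i hi
  omega

theorem sum_range_ite_lt {L m t k : ℕ} (hk : k ≤ L)
    (hy : ∀ i < L, y i = if i < t then m + 1 else m) :
    ∑ i ∈ range k, y i = k * m + min k t := by
  induction k with
  | zero => simp
  | succ k ih =>
    rw [sum_range_succ, ih (by omega), hy k (by omega)]
    split_ifs <;> grind

theorem mul_add_min_le_sum_range {L m t k : ℕ} (hx : AntitoneOn x (Set.Iio L))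
    (hsum : ∑ i ∈ range L, x i = L * m + t) (hk : k ≤ L) :
    k * m + min k t ≤ ∑ i ∈ range k, x i := by
  by_contra! hlt
  rcases k with _ | k
  · simp at hlt
  have hlast : x k ≤ m := by
    have h := card_nsmul_le_sum (range (k + 1)) x (x k) fun i hi =>
      hx (show i < L by have := mem_range.1 hi; omega) (show k < L by omega)
        (Nat.lt_succ_iff.1 (mem_range.1 hi))
    simp only [card_range, smul_eq_mul] at h
    by_contra! hm
    nlinarith [min_le_left (k + 1) t]
  have hrest : ∑ i ∈ Ico (k + 1) L, x i ≤ (L - (k + 1)) * m := by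
    simpa [mul_comm] using sum_le_card_nsmul (Ico (k + 1) L) x m fun i hi =>
      (hx (show k < L by omega) (mem_Ico.1 hi).2 (Nat.le_of_succ_le (mem_Ico.1 hi).1)).trans hlast
  have hsplit := sum_range_add_sum_Ico x hk
  have hmul : (k + 1) * m + (L - (k + 1)) * m = L * m := by rw [← add_mul]; congr 1; omega
  have := min_le_right (k + 1) t
  omega

theorem isMajorizedBy_of_balanced {L n m t : ℕ} (hLn : L ≤ n) (htL : t ≤ L)
    (hx : AntitoneOn x (Set.Iio L)) (hxtail : ∀ i, L ≤ i → i < n → x i = 1)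
    (hxL : ∑ i ∈ range L, x i = L * m + t)
    (hy : ∀ i, y i = if i < t then m + 1 else if i < L then m else 1) :
    IsMajorizedBy n y x := by
  have hyhead : ∀ i < L, y i = if i < t then m + 1 else m := fun i hi => by
    rw [hy]; split_ifs <;> omega
  have hytail : ∀ i, L ≤ i → i < n → y i = 1 := fun i hLi _ => by
    rw [hy, if_neg (by omega), if_neg (by omega)]
  refine isMajorizedBy_of_eq_one_tail hLn hxtail hytail (fun k hk => ?_) ?_
  · rw [sum_range_ite_lt hk hyhead]
    exact mul_add_min_le_sum_range hx hxL hk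
  · rw [sum_range_ite_lt le_rfl hyhead, hxL, min_eq_right htL]

theorem isMajorizedBy_star {L n c : ℕ} (hLn : L ≤ n) (hL : 0 < L)
    (hxhead : ∀ i < L, 2 ≤ x i) (hxtail : ∀ i, L ≤ i → i < n → x i = 1)
    (hxL : ∑ i ∈ range L, x i = c + 2 * L)
    (hy : ∀ i, y i = if i = 0 then c + 2 else if i < L then 2 else 1) :
    IsMajorizedBy n x y := by
  have hyhead : ∀ i, 0 < i → i < L → y i = 2 := fun i hi0 hiL => by
    rw [hy, if_neg (by omega), if_pos hiL]
  have hytail : ∀ i, L ≤ i → i < n → y i = 1 := fun i hLi _ => by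
    rw [hy, if_neg (by omega), if_neg (by omega)]
  have hyL : ∑ i ∈ range L, x i = ∑ i ∈ range L, y i := by
    have := sum_range_add_mul_eq hL hyhead
    rw [sum_range_one, hy, if_pos rfl] at this
    omega
  exact isMajorizedBy_of_eq_one_tail hLn hytail hxtail
    (fun k hk => sum_range_le_of_two_le hk hxhead hyhead hyL) hyL

end Majorization

theorem eq_one_iff_of_antitoneOn {x : ℕ → ℕ} {n p : ℕ} (hx : AntitoneOn x (Set.Iio n))
    (hpos : ∀ i < n, 1 ≤ x i) (hcard : #{i ∈ range n | x i = 1} = p) {i : ℕ} (hi : i < n) :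
    x i = 1 ↔ n - p ≤ i := by
  constructor
  · intro h1
    have hsub : Ico i n ⊆ {j ∈ range n | x j = 1} := fun j hj => by
      have hj := mem_Ico.1 hj
      have := hx (show i < n from hi) (show j < n from hj.2) hj.1
      simp only [mem_filter, mem_range]
      exact ⟨hj.2, by have := hpos j hj.2; omega⟩
    have := card_le_card hsub
    simp only [Nat.card_Ico] at this
    omega
  · intro hpi
    by_contra h2
    have hsub : {j ∈ range n | x j = 1} ⊆ Ico (i + 1) n := fun j hj => by
      simp only [mem_filter, mem_range] at hj
      refine mem_Ico.2 ⟨?_, hj.1⟩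
      by_contra! hji
      have := hx (show j < n from hj.1) (show i < n from hi) (by omega)
      have := hpos i hi
      omega
    have := card_le_card hsub
    simp only [Nat.card_Ico] at this
    omega

theorem sum_range_eq_sum_univ_of_perm {M : Type*} [AddCommMonoid M] {n : ℕ} {x : ℕ → ℕ}
    {d : Fin n → ℕ} (σ : Equiv.Perm (Fin n)) (hx : ∀ i : Fin n, x i.val = d (σ i)) (f : ℕ → M) :
    ∑ i ∈ range n, f (x i) = ∑ v, f (d v) := by
  rw [← Fin.sum_univ_eq_sum_range (fun i => f (x i)), ← Equiv.sum_comp σ (fun v => f (d v))]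
  simp only [hx]

theorem IsUnicyclic.sum_degrees {n : ℕ} {G : SimpleGraph (Fin n)} [DecidableRel G.Adj]
    (hG : IsUnicyclic G) : ∑ v, G.degree v = 2 * n := by
  rw [sum_degrees_eq_twice_card_edges, hG.2]

theorem IsUnicyclic.degree_pos {n : ℕ} {G : SimpleGraph (Fin n)} [DecidableRel G.Adj]
    (hG : IsUnicyclic G) (hn : 2 ≤ n) (v : Fin n) : 0 < G.degree v :=
  haveI := Fin.nontrivial_iff_two_le.2 hn
  hG.1.preconnected.degree_pos_of_nontrivial v

theorem IsUnicyclic.sorted_degrees {n p : ℕ} {G : SimpleGraph (Fin n)} [DecidableRel G.Adj]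
    (hG : IsUnicyclic G) (hn : 2 ≤ n) (hp : #{u | G.degree u = 1} = p)
    (σ : Equiv.Perm (Fin n)) {x : ℕ → ℕ} (hx : ∀ i : Fin n, x i.val = G.degree (σ i))
    (hanti : AntitoneOn x (Set.Iio n)) :
    (∀ i, n - p ≤ i → i < n → x i = 1) ∧ (∀ i < n - p, 2 ≤ x i) ∧
      ∑ i ∈ range (n - p), x i = 2 * n - p := by
  -- `d` cannot be inferred: the instance argument of `G.degree v` depends on `v`.
  have hxd := sum_range_eq_sum_univ_of_perm (M := ℕ) (d := fun v => G.degree v) σ hx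
  have hsum : ∑ i ∈ range n, x i = 2 * n := by simpa [hG.sum_degrees] using hxd id
  have hcount : #{i ∈ range n | x i = 1} = p := by
    rw [card_filter, hxd fun k => if k = 1 then 1 else 0, ← card_filter, hp]
  have hpos : ∀ i < n, 1 ≤ x i := fun i hi => (hx ⟨i, hi⟩).symm ▸ hG.degree_pos hn _
  have hone : ∀ i < n, x i = 1 ↔ n - p ≤ i := fun i hi =>
    eq_one_iff_of_antitoneOn hanti hpos hcount hi
  have hxtail : ∀ i, n - p ≤ i → i < n → x i = 1 := fun i hLi hi => (hone i hi).2 hLi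
  refine ⟨hxtail, fun i hi => ?_, ?_⟩
  · have := hpos i (by omega)
    have := (hone i (by omega)).not.2 (by omega)
    omega
  · have hpn : p ≤ n := hcount ▸ (card_filter_le _ _).trans (card_range n).le
    have := sum_range_add_mul_eq (Nat.sub_le n p) hxtail
    omega

theorem stmt18_general {n p : ℕ} (hn : 4 ≤ n) (G : SimpleGraph (Fin n)) [DecidableRel G.Adj]
    (hG : IsUnicyclic G) (hp2 : p ≤ n - 3)
    (hp : (Finset.univ.filter (fun u : Fin n => G.degree u = 1)).card = p)
    (σ : Equiv.Perm (Fin n)) (x : ℕ → ℕ)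
    (hx : ∀ i : Fin n, x i.val = G.degree (σ i))
    (hdec : ∀ i j : ℕ, i ≤ j → j < n → x j ≤ x i)
    (m t : ℕ) (hm : m = (2 * n - p) / (n - p)) (ht : t = 2 * n - p - m * (n - p))
    (a b : ℕ → ℕ)
    (ha : ∀ i, a i = if i < t then m + 1 else if i < n - p then m else 1)
    (hb : ∀ i, b i = if i = 0 then p + 2 else if i < n - p then 2 else 1) :
    ((∀ k, k ≤ n - 1 → ∑ i ∈ Finset.range k, a i ≤ ∑ i ∈ Finset.range k, x i) ∧
      ∑ i ∈ Finset.range n, a i = ∑ i ∈ Finset.range n, x i) ∧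
    ((∀ k, k ≤ n - 1 → ∑ i ∈ Finset.range k, x i ≤ ∑ i ∈ Finset.range k, b i) ∧
      ∑ i ∈ Finset.range n, x i = ∑ i ∈ Finset.range n, b i) := by
  have hanti : AntitoneOn x (Set.Iio n) := fun i _ j hj hij => hdec i j hij hj
  obtain ⟨hxtail, hxhead, hxL⟩ := hG.sorted_degrees (by omega) hp σ hx hanti
  have hmod : t = (2 * n - p) % (n - p) := by rw [ht, hm, Nat.mod_eq_sub, Nat.mul_comm (n - p)]
  have htL : t < n - p := hmod ▸ Nat.mod_lt _ (by omega)
  have hmt : (n - p) * m + t = 2 * n - p := by rw [hmod, hm]; exact Nat.div_add_mod _ _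
  exact ⟨isMajorizedBy_of_balanced (Nat.sub_le n p) htL.le
      (hanti.mono (Set.Iio_subset_Iio (Nat.sub_le n p))) hxtail (hxL.trans hmt.symm) ha,
    isMajorizedBy_star (Nat.sub_le n p) (by omega) hxhead hxtail (by omega) hb⟩

theorem stmt18 {n p : ℕ} (hn : 4 ≤ n) (G : SimpleGraph (Fin n)) [DecidableRel G.Adj]
    (hG : IsUnicyclic G) (hp1 : 1 ≤ p) (hp2 : p ≤ n - 3)
    (hp : (Finset.univ.filter (fun u : Fin n => G.degree u = 1)).card = p)
    (σ : Equiv.Perm (Fin n)) (x : ℕ → ℕ)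
    (hx : ∀ i : Fin n, x i.val = G.degree (σ i))
    (hdec : ∀ i j : ℕ, i ≤ j → j < n → x j ≤ x i)
    (m t : ℕ) (hm : m = (2 * n - p) / (n - p)) (ht : t = 2 * n - p - m * (n - p))
    (a b : ℕ → ℕ)
    (ha : ∀ i, a i = if i < t then m + 1 else if i < n - p then m else 1)
    (hb : ∀ i, b i = if i = 0 then p + 2 else if i < n - p then 2 else 1) :
    ((∀ k, k ≤ n - 1 → ∑ i ∈ Finset.range k, a i ≤ ∑ i ∈ Finset.range k, x i) ∧
      ∑ i ∈ Finset.range n, a i = ∑ i ∈ Finset.range n, x i) ∧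
    ((∀ k, k ≤ n - 1 → ∑ i ∈ Finset.range k, x i ≤ ∑ i ∈ Finset.range k, b i) ∧
      ∑ i ∈ Finset.range n, x i = ∑ i ∈ Finset.range n, b i) :=
  stmt18_general hn G hG hp2 hp σ x hx hdec m t hm ht a b ha hb
end
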